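/- arXiv:2307.15549 — 3 statements merged into one kernel-verified Lean document; each statement's English description precedes it below -/
import Mathlib

section
/- Conservative extension: assume that ⟦com⟧_c satisfies mediation (⟦com⟧(a⋆c) ⊑ ⟦com⟧_c(a)⋆c for all a) for every command com and context c, and that ⟦com⟧_emp = ⟦com⟧ for every command (where emp, as a predicate, is the set of units). Then the CASL induced by ⟦−⟧_• conservatively extends the separation logic induced by ⟦−⟧: (relative soundness) for all st, a, b, c, if ⊢ ⟨c⟩{a} st {b} is derivable in CASL then ⊢ {a⋆c} st {b⋆c} is derivable in separation logic; (relative completeness) for all st, a, b, if ⊢ {a} st {b} is derivable in separation logic then there exists a context c such that ⊢ ⟨c⟩{a} st {b} is derivable in CASL. -/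
universe u

/-- Predicates over states: sets of states together with a top element `⊤`
indicating failure of a computation. -/
abbrev Preds (σ : Type u) : Type u := WithTop (Set σ)

/-- A separation algebra: a cancellative partial commutative monoid `(Σ, ⋆, emp)`
with a set of units `emp` such that every state has a unit and the multiplication
of two distinct units is undefined. -/
structure SepAlgebra (σ : Type u) where
  /-- The partial multiplication; `none` means undefined. -/
  mult : σ → σ → Option σ
  mult_comm : ∀ s t, mult s t = mult t s
  mult_assoc : ∀ s t u,
    (mult s t).bind (fun v => mult v u) = (mult t u).bind (fun v => mult s v)
  cancel : ∀ s₁ s₂ t u, mult s₁ t = some u → mult s₂ t = some u → s₁ = s₂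
  /-- The set of units. -/
  emp : Set σ
  unit_exists : ∀ s, ∃ e ∈ emp, mult s e = some s
  unit_undef : ∀ e₁ ∈ emp, ∀ e₂ ∈ emp, e₁ ≠ e₂ → mult e₁ e₂ = none

variable {σ : Type u}

/-- Separating conjunction, lifted to predicates (`⊤` is absorbing). -/
def SepAlgebra.star (A : SepAlgebra σ) (a b : Preds σ) : Preds σ :=
  WithTop.recTopCoe ⊤
    (fun a' => WithTop.recTopCoe ⊤
      (fun b' => (({u | ∃ s ∈ a', ∃ t ∈ b', A.mult s t = some u} : Set σ) : Preds σ)) b) a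

/-- Sequential programs over a set `C` of commands. -/
inductive Stmt (C : Type*) where
  | com : C → Stmt C
  | choice : Stmt C → Stmt C → Stmt C
  | seq : Stmt C → Stmt C → Stmt C
  | loop : Stmt C → Stmt C

variable {C : Type*}

/-- Denotational semantics of programs, derived from a semantics of commands:
choice is join, sequencing is composition, iteration is the join of the iterates. -/
noncomputable def denote (sem : C → Preds σ → Preds σ) : Stmt C → Preds σ → Preds σ
  | .com c => sem c
  | .choice st₁ st₂ => fun a => denote sem st₁ a ⊔ denote sem st₂ a
  | .seq st₁ st₂ => fun a => denote sem st₂ (denote sem st₁ a)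
  | .loop st => fun a => ⨆ i : ℕ, (denote sem st)^[i] a

/-- The separation-logic proof system. -/
inductive SLDeriv (A : SepAlgebra σ) (sem : C → Preds σ → Preds σ) :
    Preds σ → Stmt C → Preds σ → Prop
  | com {c : C} {a b : Preds σ} :
      sem c a ≤ b → SLDeriv A sem a (.com c) b
  | consequence {a a' b b' : Preds σ} {st : Stmt C} :
      a ≤ a' → b' ≤ b → SLDeriv A sem a' st b' → SLDeriv A sem a st b
  | seq {a b d : Preds σ} {st₁ st₂ : Stmt C} :
      SLDeriv A sem a st₁ b → SLDeriv A sem b st₂ d → SLDeriv A sem a (.seq st₁ st₂) d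
  | choice {a b : Preds σ} {st₁ st₂ : Stmt C} :
      SLDeriv A sem a st₁ b → SLDeriv A sem a st₂ b → SLDeriv A sem a (.choice st₁ st₂) b
  | loop {a : Preds σ} {st : Stmt C} :
      SLDeriv A sem a st a → SLDeriv A sem a (.loop st) a
  | frame {a b d : Preds σ} {st : Stmt C} :
      SLDeriv A sem a st b → SLDeriv A sem (A.star a d) st (A.star b d)
inductive CASLDeriv (A : SepAlgebra σ) (casem : C → Preds σ → Preds σ → Preds σ) :
    Preds σ → Preds σ → Stmt C → Preds σ → Prop
  | com {c : C} {ctx a b : Preds σ} :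
      casem c ctx a ≤ b → CASLDeriv A casem ctx a (.com c) b
  | consequence {ctx a a' b b' : Preds σ} {st : Stmt C} :
      a ≤ a' → b' ≤ b → CASLDeriv A casem ctx a' st b' → CASLDeriv A casem ctx a st b
  | seq {ctx a b d : Preds σ} {st₁ st₂ : Stmt C} :
      CASLDeriv A casem ctx a st₁ b → CASLDeriv A casem ctx b st₂ d →
      CASLDeriv A casem ctx a (.seq st₁ st₂) d
  | choice {ctx a b : Preds σ} {st₁ st₂ : Stmt C} :
      CASLDeriv A casem ctx a st₁ b → CASLDeriv A casem ctx a st₂ b →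
      CASLDeriv A casem ctx a (.choice st₁ st₂) b
  | loop {ctx a : Preds σ} {st : Stmt C} :
      CASLDeriv A casem ctx a st a → CASLDeriv A casem ctx a (.loop st) a
  | frame {ctx a b d : Preds σ} {st : Stmt C} :
      CASLDeriv A casem ctx a st b →
      CASLDeriv A casem ctx (A.star a d) st (A.star b d)
  | context {ctx a b d : Preds σ} {st : Stmt C} :
      CASLDeriv A casem (A.star ctx d) a st b →
      CASLDeriv A casem ctx (A.star a d) st (A.star b d)
  | widen {ctx a b d : Preds σ} {st : Stmt C} :
      CASLDeriv A casem ctx (A.star a d) st (A.star b d) →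
      CASLDeriv A casem (A.star ctx d) a st b

namespace SepAlgebra

variable (A : SepAlgebra σ)

lemma star_coe_coe (a b : Set σ) :
    A.star (a : Preds σ) (b : Preds σ) =
      (({u | ∃ s ∈ a, ∃ t ∈ b, A.mult s t = some u} : Set σ) : Preds σ) := rfl

lemma star_top_right (a : Preds σ) : A.star a ⊤ = ⊤ := by
  induction a using WithTop.recTopCoe <;> rfl

lemma star_top_left (a : Preds σ) : A.star ⊤ a = ⊤ := rfl

lemma star_comm (a b : Preds σ) : A.star a b = A.star b a := by
  induction a using WithTop.recTopCoe with
  | top => rw [star_top_right]; rfl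
  | coe a =>
    induction b using WithTop.recTopCoe with
    | top => rfl
    | coe b =>
      rw [star_coe_coe, star_coe_coe]
      congr 1
      ext u
      constructor
      · rintro ⟨s, hs, t, ht, h⟩; exact ⟨t, ht, s, hs, by rwa [A.mult_comm]⟩
      · rintro ⟨s, hs, t, ht, h⟩; exact ⟨t, ht, s, hs, by rwa [A.mult_comm]⟩

lemma star_assoc (a b c : Preds σ) : A.star (A.star a b) c = A.star a (A.star b c) := by
  induction a using WithTop.recTopCoe with
  | top => rfl
  | coe a =>
    induction b using WithTop.recTopCoe with
    | top => rfl
    | coe b =>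
      induction c using WithTop.recTopCoe with
      | top => rw [star_top_right, star_top_right, star_top_right]
      | coe c =>
        rw [star_coe_coe, star_coe_coe, star_coe_coe, star_coe_coe]
        congr 1
        ext u
        constructor
        · rintro ⟨s, ⟨x, hx, y, hy, hxy⟩, z, hz, hsz⟩
          have h := A.mult_assoc x y z
          rw [hxy] at h
          simp only [Option.bind_some] at h
          rw [hsz] at h
          obtain ⟨w, hw, hxw⟩ : ∃ w, A.mult y z = some w ∧ A.mult x w = some u := by
            cases hyz : A.mult y z with
            | none => rw [hyz] at h; simp [Option.bind] at h
            | some w => rw [hyz] at h; exact ⟨w, rfl, by simpa using h.symm⟩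
          exact ⟨x, hx, w, ⟨y, hy, z, hz, hw⟩, hxw⟩
        · rintro ⟨x, hx, w, ⟨y, hy, z, hz, hyz⟩, hxw⟩
          have h := A.mult_assoc x y z
          rw [hyz] at h
          simp only [Option.bind_some] at h
          rw [hxw] at h
          obtain ⟨v, hv, hvz⟩ : ∃ v, A.mult x y = some v ∧ A.mult v z = some u := by
            cases hxy : A.mult x y with
            | none => rw [hxy] at h; simp [Option.bind] at h
            | some v => rw [hxy] at h; exact ⟨v, rfl, by simpa using h⟩
          exact ⟨v, ⟨x, hx, y, hy, hv⟩, z, hz, hvz⟩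

lemma star_le_star {a a' b b' : Preds σ} (ha : a ≤ a') (hb : b ≤ b') :
    A.star a b ≤ A.star a' b' := by
  induction a' using WithTop.recTopCoe with
  | top => exact le_top
  | coe a' =>
    induction b' using WithTop.recTopCoe with
    | top => rw [star_top_right]; exact le_top
    | coe b' =>
      induction a using WithTop.recTopCoe with
      | top => exact absurd ha (by simp)
      | coe a =>
        induction b using WithTop.recTopCoe with
        | top => exact absurd hb (by simp)
        | coe b =>
          rw [star_coe_coe, star_coe_coe, WithTop.coe_le_coe]
          rw [WithTop.coe_le_coe] at ha hb
          rintro u ⟨s, hs, t, ht, h⟩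
          exact ⟨s, ha hs, t, hb ht, h⟩

lemma star_right_comm (a b c : Preds σ) :
    A.star (A.star a b) c = A.star (A.star a c) b := by
  rw [star_assoc, star_comm A b c, star_assoc]

lemma star_rot (a d ctx : Preds σ) :
    A.star (A.star a d) ctx = A.star a (A.star ctx d) := by
  rw [star_assoc, star_comm A d ctx]

end SepAlgebra

/-- Conservative extension. If the context-aware semantics satisfies
mediation for every command and context, and coincides with the standard semantics
on the empty context (the set of units), then the induced CASL conservatively
extends the separation logic induced by the standard semantics:
relative soundness and relative completeness. -/
theorem casl_conservative_extension (A : SepAlgebra σ)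
    (sem : C → Preds σ → Preds σ) (casem : C → Preds σ → Preds σ → Preds σ)
    (hmediation : ∀ (c : C) (ctx a : Preds σ),
      sem c (A.star a ctx) ≤ A.star (casem c ctx a) ctx)
    (hemp : ∀ c : C, casem c ((A.emp : Set σ) : Preds σ) = sem c) :
    (∀ (st : Stmt C) (a b ctx : Preds σ),
        CASLDeriv A casem ctx a st b →
        SLDeriv A sem (A.star a ctx) st (A.star b ctx)) ∧
    (∀ (st : Stmt C) (a b : Preds σ),
        SLDeriv A sem a st b → ∃ ctx : Preds σ, CASLDeriv A casem ctx a st b) := by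
  constructor
  · intro st a b ctx h
    induction h with
    | com h =>
        exact SLDeriv.com ((hmediation _ _ _).trans (A.star_le_star h le_rfl))
    | consequence ha hb _ ih =>
        exact SLDeriv.consequence (A.star_le_star ha le_rfl) (A.star_le_star hb le_rfl) ih
    | seq _ _ ih₁ ih₂ => exact SLDeriv.seq ih₁ ih₂
    | choice _ _ ih₁ ih₂ => exact SLDeriv.choice ih₁ ih₂
    | loop _ ih => exact SLDeriv.loop ih
    | frame _ ih =>
        exact SLDeriv.consequence (le_of_eq (A.star_right_comm _ _ _))
          (le_of_eq (A.star_right_comm _ _ _)) (SLDeriv.frame ih)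
    | context _ ih =>
        exact SLDeriv.consequence (le_of_eq (A.star_rot _ _ _))
          (le_of_eq (A.star_rot _ _ _).symm) ih
    | widen _ ih =>
        exact SLDeriv.consequence (le_of_eq (A.star_rot _ _ _).symm)
          (le_of_eq (A.star_rot _ _ _)) ih
  · intro st a b h
    refine ⟨((A.emp : Set σ) : Preds σ), ?_⟩
    induction h with
    | com h => exact CASLDeriv.com (by rwa [hemp])
    | consequence ha hb _ ih => exact CASLDeriv.consequence ha hb ih
    | seq _ _ ih₁ ih₂ => exact CASLDeriv.seq ih₁ ih₂
    | choice _ _ ih₁ ih₂ => exact CASLDeriv.choice ih₁ ih₂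
    | loop _ ih => exact CASLDeriv.loop ih
    | frame _ ih => exact CASLDeriv.frame ih
end

section
/- The induced context-aware semantics yields a conservative extension: the CASL induced by the induced context-aware predicate transformers ⟦com⟧ind_• conservatively extends the separation logic induced by ⟦−⟧, i.e. (relative soundness) every derivable CASL judgment ⊢ ⟨c⟩{a} st {b} yields a derivable separation-logic triple ⊢ {a⋆c} st {b⋆c}, and (relative completeness) every derivable separation-logic triple ⊢ {a} st {b} yields a context c with a derivable CASL judgment ⊢ ⟨c⟩{a} st {b}. -/
universe u

variable {σ : Type u}

/-- Predicates form a complete lattice (set inclusion with `⊤` on top). -/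
noncomputable instance Preds.instCompleteLattice {σ : Type u} : CompleteLattice (Preds σ) :=
  completeLatticeOfSup (Preds σ) fun S => by
    rcases S.eq_empty_or_nonempty with rfl | hS
    · constructor
      · rintro x ⟨⟩
      · rintro b -
        have h : sSup (∅ : Set (Preds σ)) = ((⊥ : Set σ) : Preds σ) := by
          rw [WithTop.sSup_eq (by simp) (OrderTop.bddAbove _)]
          simp
        rw [h]
        induction b using WithTop.recTopCoe with
        | top => exact le_top
        | coe b => exact WithTop.coe_le_coe.2 bot_le
    · exact WithTop.isLUB_sSup' hS

/-- A (partial) ghost multiplication on states, lifted to predicates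
(`⊤` is absorbing). -/
def gstar (imult : σ → σ → Option σ) (a b : Preds σ) : Preds σ :=
  WithTop.recTopCoe ⊤
    (fun a' => WithTop.recTopCoe ⊤
      (fun b' => (({u | ∃ s ∈ a', ∃ t ∈ b', imult s t = some u} : Set σ) : Preds σ)) b) a
variable {C : Type*}
attribute [local instance] Classical.propDecidable

/-! Relative soundness rests on one inequality, `⟦com⟧(a ⋆ c) ⊑ ⟦com⟧ind_c(a) ⋆ c`. For the empty
context it is locality. Otherwise `⟦com⟧(a ⋆ c) = up(com)(a) ⌢ c ⊑ up♯(com)(a) ⌢ c ⊑ [c]♯(a') ⋆ [a']♯(c)`,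
and the side condition `c = [a']♯(c)` turns the right-hand side into `⟦com⟧ind_c(a) ⋆ c`; in the
remaining case `⟦com⟧ind_c(a) = ⊤`. By induction every CASL judgment `⟨c⟩{a} st {b}` then gives
`{a ⋆ c} st {b ⋆ c}`, the frame, context and widen rules only reassociating the frame. Conversely,
`⟦com⟧ind_emp = ⟦com⟧` makes every SL derivation a CASL derivation in the empty context. -/

theorem gstar_coe (m : σ → σ → Option σ) (a b : Set σ) :
    gstar m a b = (({u | ∃ s ∈ a, ∃ t ∈ b, m s t = some u} : Set σ) : Preds σ) := rfl

theorem gstar_top_left (m : σ → σ → Option σ) (b : Preds σ) : gstar m ⊤ b = ⊤ := rfl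

theorem gstar_top_right (m : σ → σ → Option σ) (a : Preds σ) : gstar m a ⊤ = ⊤ := by
  induction a using WithTop.recTopCoe <;> rfl

theorem gstar_mono (m : σ → σ → Option σ) {a a' b b' : Preds σ} (ha : a ≤ a') (hb : b ≤ b') :
    gstar m a b ≤ gstar m a' b' := by
  induction a' using WithTop.recTopCoe with
  | top => exact (gstar_top_left m b').symm ▸ le_top
  | coe a' =>
  induction b' using WithTop.recTopCoe with
  | top => exact (gstar_top_right m _).symm ▸ le_top
  | coe b' =>
  lift a to Set σ using ne_top_of_le_ne_top WithTop.coe_ne_top ha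
  lift b to Set σ using ne_top_of_le_ne_top WithTop.coe_ne_top hb
  rw [WithTop.coe_le_coe] at ha hb
  rw [gstar_coe, gstar_coe, WithTop.coe_le_coe]
  exact fun u ⟨s, hs, t, ht, h⟩ => ⟨s, ha hs, t, hb ht, h⟩

theorem gstar_comm (m : σ → σ → Option σ) (hm : ∀ s t, m s t = m t s) (a b : Preds σ) :
    gstar m a b = gstar m b a := by
  induction a using WithTop.recTopCoe with
  | top => rw [gstar_top_left, gstar_top_right]
  | coe a =>
  induction b using WithTop.recTopCoe with
  | top => rw [gstar_top_left, gstar_top_right]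
  | coe b =>
  rw [gstar_coe, gstar_coe]
  congr 1
  ext u
  constructor <;> exact fun ⟨s, hs, t, ht, h⟩ => ⟨t, ht, s, hs, hm s t ▸ h⟩

theorem gstar_assoc (m : σ → σ → Option σ)
    (hm : ∀ s t u, (m s t).bind (fun v => m v u) = (m t u).bind (fun v => m s v))
    (a b c : Preds σ) : gstar m (gstar m a b) c = gstar m a (gstar m b c) := by
  induction a using WithTop.recTopCoe with
  | top => rfl
  | coe a =>
  induction b using WithTop.recTopCoe with
  | top => rw [gstar_top_right, gstar_top_left, gstar_top_right]
  | coe b =>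
  induction c using WithTop.recTopCoe with
  | top => rw [gstar_top_right, gstar_top_right, gstar_top_right]
  | coe c =>
  rw [gstar_coe, gstar_coe, gstar_coe, gstar_coe]
  congr 1
  ext u
  constructor
  · rintro ⟨v, ⟨s, hs, t, ht, hst⟩, w, hw, hvw⟩
    have : (m t w).bind (m s) = some u := by rw [← hm, hst]; exact hvw
    obtain ⟨x, htw, hsx⟩ := Option.bind_eq_some_iff.1 this
    exact ⟨s, hs, x, ⟨t, ht, w, hw, htw⟩, hsx⟩
  · rintro ⟨s, hs, x, ⟨t, ht, w, hw, htw⟩, hsx⟩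
    have : (m s t).bind (fun v => m v w) = some u := by rw [hm, htw]; exact hsx
    obtain ⟨v, hst, hvw⟩ := Option.bind_eq_some_iff.1 this
    exact ⟨v, ⟨s, hs, t, ht, hst⟩, w, hw, hvw⟩

theorem SepAlgebra.top_star (A : SepAlgebra σ) (b : Preds σ) : A.star ⊤ b = ⊤ := rfl

theorem SepAlgebra.star_mono (A : SepAlgebra σ) {a a' b b' : Preds σ}
    (ha : a ≤ a') (hb : b ≤ b') : A.star a b ≤ A.star a' b' :=
  gstar_mono A.mult ha hb

theorem SepAlgebra.star_comm_s4 (A : SepAlgebra σ) (a b : Preds σ) : A.star a b = A.star b a :=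
  gstar_comm A.mult A.mult_comm a b

theorem SepAlgebra.star_assoc_s4 (A : SepAlgebra σ) (a b c : Preds σ) :
    A.star (A.star a b) c = A.star a (A.star b c) :=
  gstar_assoc A.mult A.mult_assoc a b c

theorem SepAlgebra.star_right_comm_s4 (A : SepAlgebra σ) (a b c : Preds σ) :
    A.star (A.star a b) c = A.star (A.star a c) b := by
  rw [A.star_assoc_s4, A.star_comm_s4 b c, ← A.star_assoc_s4]

theorem CASLDeriv.toSLDeriv {A : SepAlgebra σ} {sem : C → Preds σ → Preds σ}
    {casem : C → Preds σ → Preds σ → Preds σ}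
    (hvalid : ∀ c ctx a, sem c (A.star a ctx) ≤ A.star (casem c ctx a) ctx)
    {ctx a b : Preds σ} {st : Stmt C} (h : CASLDeriv A casem ctx a st b) :
    SLDeriv A sem (A.star a ctx) st (A.star b ctx) := by
  induction h with
  | com hle => exact .com ((hvalid _ _ _).trans (A.star_mono hle le_rfl))
  | consequence ha hb _ ih =>
    exact .consequence (A.star_mono ha le_rfl) (A.star_mono hb le_rfl) ih
  | seq _ _ ih₁ ih₂ => exact .seq ih₁ ih₂
  | choice _ _ ih₁ ih₂ => exact .choice ih₁ ih₂
  | loop _ ih => exact .loop ih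
  | @frame ctx a b d _ _ ih =>
    rw [A.star_right_comm_s4 a d, A.star_right_comm_s4 b d]
    exact ih.frame
  | @context ctx a b d _ _ ih =>
    rwa [A.star_right_comm_s4 a d, A.star_assoc_s4 a, A.star_right_comm_s4 b d, A.star_assoc_s4 b]
  | @widen ctx a b d _ _ ih =>
    rwa [A.star_right_comm_s4 a d, A.star_assoc_s4 a, A.star_right_comm_s4 b d, A.star_assoc_s4 b] at ih

theorem SLDeriv.toCASLDeriv {A : SepAlgebra σ} {sem : C → Preds σ → Preds σ}
    {casem : C → Preds σ → Preds σ → Preds σ} {ctx : Preds σ}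
    (hsem : ∀ c a, casem c ctx a = sem c a)
    {a b : Preds σ} {st : Stmt C} (h : SLDeriv A sem a st b) : CASLDeriv A casem ctx a st b := by
  induction h with
  | com hle => exact .com ((hsem _ _).trans_le hle)
  | consequence ha hb _ ih => exact .consequence ha hb ih
  | seq _ _ ih₁ ih₂ => exact .seq ih₁ ih₂
  | choice _ _ ih₁ ih₂ => exact .choice ih₁ ih₂
  | loop _ ih => exact .loop ih
  | frame _ ih => exact .frame ih

/-- `⟦c⟧ind_ctx(a)`. -/
noncomputable def inducedSem (A : SepAlgebra σ) (sem upS : C → Preds σ → Preds σ)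
    (gabs : Preds σ → Preds σ → Preds σ) (c : C) (ctx a : Preds σ) : Preds σ :=
  if ctx = ((A.emp : Set σ) : Preds σ) then sem c a
  else if ctx = gabs (upS c a) ctx then gabs ctx (upS c a) else ⊤

theorem inducedSem_emp (A : SepAlgebra σ) (sem upS : C → Preds σ → Preds σ)
    (gabs : Preds σ → Preds σ → Preds σ) (c : C) (a : Preds σ) :
    inducedSem A sem upS gabs c (A.emp : Set σ) a = sem c a :=
  if_pos rfl

theorem sem_star_le_star_inducedSem (A : SepAlgebra σ) (imult : σ → σ → Option σ)
    (sem up upS : C → Preds σ → Preds σ) (gabs : Preds σ → Preds σ → Preds σ)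
    (hgabs_strict : ∀ a : Preds σ, gabs a ⊤ = ⊤)
    (hsem_local : ∀ (c : C) (a b : Preds σ), sem c (A.star a b) ≤ A.star (sem c a) b)
    (hsem_up : ∀ (c : C) (a d : Preds σ), sem c (A.star a d) = up c (A.star a d))
    (hup_dec : ∀ (c : C) (a d : Preds σ), up c a ≠ ⊤ →
      up c (A.star a d) = gstar imult (up c a) d)
    (hupS_sound : ∀ (c : C) (a : Preds σ), up c a ≤ upS c a)
    (hgabs_sound : ∀ a d : Preds σ, gstar imult a d ≤ A.star (gabs d a) (gabs a d))
    (c : C) (ctx a : Preds σ) :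
    sem c (A.star a ctx) ≤ A.star (inducedSem A sem upS gabs c ctx a) ctx := by
  unfold inducedSem
  split_ifs with _ hfix
  · exact hsem_local c a ctx
  · by_cases hupS : upS c a = ⊤
    · rw [hupS, hgabs_strict, A.top_star]
      exact le_top
    have hup : up c a ≠ ⊤ := ne_top_of_le_ne_top hupS (hupS_sound c a)
    calc sem c (A.star a ctx) = up c (A.star a ctx) := hsem_up c a ctx
      _ = gstar imult (up c a) ctx := hup_dec c a ctx hup
      _ ≤ gstar imult (upS c a) ctx := gstar_mono imult (hupS_sound c a) le_rfl
      _ ≤ A.star (gabs ctx (upS c a)) (gabs (upS c a) ctx) := hgabs_sound _ _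
      _ = A.star (gabs ctx (upS c a)) ctx := by rw [← hfix]
  · rw [A.top_star]
    exact le_top

theorem induced_casl_conservative_extension_general (A : SepAlgebra σ)
    (imult : σ → σ → Option σ)
    (sem up upS : C → Preds σ → Preds σ) (gabs : Preds σ → Preds σ → Preds σ)
    -- predicate transformers: strict in ⊤, distributing over arbitrary joins
    (hgabs_strict : ∀ a : Preds σ, gabs a ⊤ = ⊤)
    -- the standard semantics is local
    (hsem_local : ∀ (c : C) (a b : Preds σ), sem c (A.star a b) ≤ A.star (sem c a) b)
    -- the semantics decomposes into the core update and the induced update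
    (hsem_up : ∀ (c : C) (a d : Preds σ), sem c (A.star a d) = up c (A.star a d))
    (hup_dec : ∀ (c : C) (a d : Preds σ), up c a ≠ ⊤ →
      up c (A.star a d) = gstar imult (up c a) d)
    -- `up♯` is an approximate core update
    (hupS_sound : ∀ (c : C) (a : Preds σ), up c a ≤ upS c a)
    -- `[·]♯` is an approximate ghost multiplication
    (hgabs_sound : ∀ a d : Preds σ, gstar imult a d ≤ A.star (gabs d a) (gabs a d))
    -- the induced context-aware semantics
    (casem : C → Preds σ → Preds σ → Preds σ)
    (hcasem : ∀ (c : C) (ctx a : Preds σ),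
      casem c ctx a =
        if ctx = ((A.emp : Set σ) : Preds σ) then sem c a
        else if ctx = gabs (upS c a) ctx then gabs ctx (upS c a) else ⊤) :
    (∀ (st : Stmt C) (a b ctx : Preds σ),
        CASLDeriv A casem ctx a st b →
        SLDeriv A sem (A.star a ctx) st (A.star b ctx)) ∧
    (∀ (st : Stmt C) (a b : Preds σ),
        SLDeriv A sem a st b → ∃ ctx : Preds σ, CASLDeriv A casem ctx a st b) := by
  obtain rfl : casem = inducedSem A sem upS gabs := funext fun c => funext fun ctx =>
    funext fun a => hcasem c ctx a
  exact ⟨fun _ _ _ _ h => h.toSLDeriv (sem_star_le_star_inducedSem A imult sem up upS gabs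
      hgabs_strict hsem_local hsem_up hup_dec hupS_sound hgabs_sound),
    fun _ _ _ h => ⟨_, h.toCASLDeriv (inducedSem_emp A sem upS gabs)⟩⟩

/-- The induced context-aware semantics yields a conservative
extension. The induced context-aware predicate transformer `⟦com⟧ind_c` is:
`⟦com⟧ind_emp = ⟦com⟧`, and for `c ≠ emp`, `⟦com⟧ind_c(a) = [c]♯(a')` if
`c = [a']♯(c)` (where `a' = up♯(com)(a)`) and `⊤` otherwise. The CASL induced
by it conservatively extends the separation logic induced by `⟦−⟧`:
relative soundness and relative completeness hold. -/
theorem induced_casl_conservative_extension (A : SepAlgebra σ)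
    (imult : σ → σ → Option σ)
    (imult_comm : ∀ s t, imult s t = imult t s)
    (imult_assoc : ∀ s t u,
      (imult s t).bind (fun v => imult v u) = (imult t u).bind (fun v => imult s v))
    (sem up upS : C → Preds σ → Preds σ) (gabs : Preds σ → Preds σ → Preds σ)
    -- predicate transformers: strict in ⊤, distributing over arbitrary joins
    (hsem_strict : ∀ c : C, sem c ⊤ = ⊤)
    (hsem_join : ∀ (c : C) (P : Set (Preds σ)), sem c (sSup P) = ⨆ a ∈ P, sem c a)
    (hup_strict : ∀ c : C, up c ⊤ = ⊤)
    (hup_join : ∀ (c : C) (P : Set (Preds σ)), up c (sSup P) = ⨆ a ∈ P, up c a)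
    (hupS_strict : ∀ c : C, upS c ⊤ = ⊤)
    (hupS_join : ∀ (c : C) (P : Set (Preds σ)), upS c (sSup P) = ⨆ a ∈ P, upS c a)
    (hgabs_strict : ∀ a : Preds σ, gabs a ⊤ = ⊤)
    (hgabs_join : ∀ (a : Preds σ) (P : Set (Preds σ)),
      gabs a (sSup P) = ⨆ d ∈ P, gabs a d)
    -- the standard semantics is local
    (hsem_local : ∀ (c : C) (a b : Preds σ), sem c (A.star a b) ≤ A.star (sem c a) b)
    -- the semantics decomposes into the core update and the induced update
    (hsem_up : ∀ (c : C) (a d : Preds σ), sem c (A.star a d) = up c (A.star a d))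
    (hup_dec : ∀ (c : C) (a d : Preds σ), up c a ≠ ⊤ →
      up c (A.star a d) = gstar imult (up c a) d)
    -- `up♯` is an approximate core update
    (hupS_dec : ∀ (c : C) (a d : Preds σ), upS c a ≠ ⊤ →
      upS c (A.star a d) = gstar imult (upS c a) d)
    (hupS_sound : ∀ (c : C) (a : Preds σ), up c a ≤ upS c a)
    -- `[·]♯` is an approximate ghost multiplication
    (hgabs_sound : ∀ a d : Preds σ, gstar imult a d ≤ A.star (gabs d a) (gabs a d))
    -- the induced context-aware semantics
    (casem : C → Preds σ → Preds σ → Preds σ)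
    (hcasem : ∀ (c : C) (ctx a : Preds σ),
      casem c ctx a =
        if ctx = ((A.emp : Set σ) : Preds σ) then sem c a
        else if ctx = gabs (upS c a) ctx then gabs ctx (upS c a) else ⊤) :
    (∀ (st : Stmt C) (a b ctx : Preds σ),
        CASLDeriv A casem ctx a st b →
        SLDeriv A sem (A.star a ctx) st (A.star b ctx)) ∧
    (∀ (st : Stmt C) (a b : Preds σ),
        SLDeriv A sem a st b → ∃ ctx : Preds σ, CASLDeriv A casem ctx a st b) :=
  induced_casl_conservative_extension_general A imult sem up upS gabs hgabs_strict hsem_local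
    hsem_up hup_dec hupS_sound hgabs_sound casem hcasem
end

section
/- Partial fixed-point computation (Bekić-style): let h₁ = (X₁, E₁, in₁) and h₂ = (X₂, E₂, in₂) be flow graphs with h₁ ⋆ h₂ defined. Define, for cval : X₂ → M, the inflow in_cval : (ℕ∖X₁) × X₁ → M by in_cval(x,y) = E₂(x,y)(cval(x)) if x ∈ X₂ and in_cval(x,y) = (h₁⋆h₂).in(x,y) otherwise, and define f : (X₂ → M) → (X₂ → M) by f(cval)(x) = Σ_{z∉X₁∪X₂} (h₁⋆h₂).in(z,x) + tf(h₁)(in_cval)(x) + Σ_{y∈X₂} E₂(y,x)(cval(y)). Then f is monotone and continuous with respect to the pointwise natural order, and h₂.flow = lfp(f) = ⨆_{i∈ℕ} fⁱ(⊥). Furthermore, if compatible_⪯(h₁⋆h₂) holds for a relation ⪯ on M, then f is monotone with respect to the pointwise lifting of ⪯. -/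
/-!
The flow of `h₁ ⋆ h₂` is the least fixed point of a single step function on `X₁ ∪ X₂`, and
Bekić's principle computes it in two stages. For fixed values `cval` on `X₂`, the least fixed
point on `X₁` is `h₁.flowWith in_cval`; its outflow into `X₂` is the transfer-function term of
`f`, and the least fixed point of `f` is the `X₂`-part of the joint one. Continuity of `f` holds
because the inner step function is jointly continuous in `cval` and in its argument, so Kleene
iteration on `X₁` commutes with joins of `cval`. For `⪯`, (C4) compares the inner Kleene
chains for two `⪯`-related values of `cval`.
-/

universe u

/-- A flow monoid: a commutative monoid whose natural order
(`m ≤ n ↔ ∃ o, n = m + o`) is a partial order that forms an ω-cpo, with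
continuous addition. `csup` assigns to every ascending chain its join. -/
class FlowMonoid (M : Type u) extends AddCommMonoid M, PartialOrder M, IsOrderedAddMonoid M,
    CanonicallyOrderedAdd M where
  /-- The join of an ascending chain. -/
  csup : (ℕ → M) → M
  isLUB_csup : ∀ K : ℕ → M, Monotone K → IsLUB (Set.range K) (csup K)
  add_csup : ∀ (n : M) (K : ℕ → M), Monotone K → n + csup K = csup fun i => n + K i

variable {M : Type u} [FlowMonoid M]

/-- Continuity: `f` commutes with joins of ascending chains. -/
def FMCont (f : M → M) : Prop :=
  ∀ K : ℕ → M, Monotone K →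
    IsLUB (Set.range fun i => f (K i)) (f (FlowMonoid.csup K))

/-- A flow graph: a finite set of nodes `X ⊆ ℕ`, continuous edge functions, and
a finitely supported inflow from sources outside `X` into `X`. (The edge
functions of sources outside `X` and the inflow outside its domain are
canonically zero.) -/
structure FlowGraph (M : Type u) [FlowMonoid M] where
  /-- The nodes. -/
  X : Finset ℕ
  /-- The edge functions: `E x y` labels the edge from `x` to `y`. -/
  E : ℕ → ℕ → M → M
  /-- The inflow: `inflow y x` is the flow the graph receives at `x ∈ X` from the
  external node `y ∉ X`. -/
  inflow : ℕ → ℕ → M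
  econt : ∀ x y, x ∈ X → FMCont (E x y)
  edom : ∀ x y, x ∉ X → E x y = fun _ => 0
  inflow_fin : ∀ x, (Function.support fun y => inflow y x).Finite
  inflow_dom : ∀ y x, inflow y x ≠ 0 → y ∉ X ∧ x ∈ X

namespace FlowGraph

/-- One step of the flow fixed-point computation, with inflow `i`. -/
noncomputable def stepWith (h : FlowGraph M) (i : ℕ → ℕ → M) (c : ℕ → M) : ℕ → M :=
  fun x => if x ∈ h.X then (∑ᶠ y, i y x) + ∑ y ∈ h.X, h.E y x (c y) else 0

/-- The flow for a custom inflow `i`, obtained by Kleene iteration: the least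
function satisfying the flow equation. -/
noncomputable def flowWith (h : FlowGraph M) (i : ℕ → ℕ → M) : ℕ → M :=
  fun x => FlowMonoid.csup fun n => (h.stepWith i)^[n] (fun _ => 0) x

/-- The flow of a flow graph. -/
noncomputable def flow (h : FlowGraph M) : ℕ → M := h.flowWith h.inflow

/-- The outflow of a flow graph: `out x y = E x y (flow x)`. -/
noncomputable def out (h : FlowGraph M) (x y : ℕ) : M := h.E x y (h.flow x)

/-- The transfer function: maps an inflow `i` to the resulting outflow at `y`. -/
noncomputable def tf (h : FlowGraph M) (i : ℕ → ℕ → M) (y : ℕ) : M :=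
  ∑ x ∈ h.X, h.E x y (h.flowWith i x)

/-- The ghost multiplication of flow graphs: disjoint union of the node sets and
edges; the inflow of each component is restricted to sources outside the other. -/
def gmul (s t : FlowGraph M) : FlowGraph M where
  X := s.X ∪ t.X
  E := fun x y => if x ∈ s.X then s.E x y else t.E x y
  inflow := fun y x => if y ∈ s.X ∪ t.X then 0 else s.inflow y x + t.inflow y x
  econt := by
    intro x y hx
    try dsimp only
    by_cases hs : x ∈ s.X
    · rw [if_pos hs]; exact s.econt x y hs
    · rw [if_neg hs]
      rcases Finset.mem_union.mp hx with h | h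
      · exact absurd h hs
      · exact t.econt x y h
  edom := by
    intro x y hx
    try dsimp only
    rw [if_neg fun h => hx (Finset.mem_union_left _ h)]
    exact t.edom x y fun h => hx (Finset.mem_union_right _ h)
  inflow_fin := by
    intro x
    refine Set.Finite.subset ((s.inflow_fin x).union (t.inflow_fin x)) ?_
    intro y hy
    rw [Function.mem_support] at hy
    try dsimp only at hy
    by_cases hmem : y ∈ s.X ∪ t.X
    · rw [if_pos hmem] at hy; exact absurd rfl hy
    · rw [if_neg hmem] at hy
      by_cases h1 : s.inflow y x = 0
      · have h2 : t.inflow y x ≠ 0 := fun h2 => hy (by rw [h1, h2, add_zero])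
        exact Set.mem_union_right _ (Function.mem_support.mpr h2)
      · exact Set.mem_union_left _ (Function.mem_support.mpr h1)
  inflow_dom := by
    intro y x hy
    try dsimp only at hy
    by_cases hmem : y ∈ s.X ∪ t.X
    · rw [if_pos hmem] at hy; exact absurd rfl hy
    · rw [if_neg hmem] at hy
      refine ⟨hmem, ?_⟩
      by_cases h1 : s.inflow y x = 0
      · have h2 : t.inflow y x ≠ 0 := fun h2 => hy (by rw [h1, h2, add_zero])
        exact Finset.mem_union_right _ (t.inflow_dom y x h2).2
      · exact Finset.mem_union_left _ (s.inflow_dom y x h1).2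

/-- Definedness of the multiplication `s ⋆ t` of flow graphs: the ghost
multiplication is defined, the inflow expectation of each graph at the mutual
boundary matches the outflow of the other, and the flows are preserved in the
composition (whose result is then `gmul s t`). -/
def MDef (s t : FlowGraph M) : Prop :=
  Disjoint s.X t.X ∧
  (∀ x ∈ s.X, ∀ y ∈ t.X, s.out x y = t.inflow x y ∧ t.out y x = s.inflow y x) ∧
  (∀ x ∈ s.X, (gmul s t).flow x = s.flow x) ∧
  (∀ y ∈ t.X, (gmul s t).flow y = t.flow y)

end FlowGraph

/-- The pointwise join of an ascending chain of functions `X → M`. -/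
noncomputable def chainJoin {X : Finset ℕ} (Ch : ℕ → ({x : ℕ // x ∈ X} → M)) :
    {x : ℕ // x ∈ X} → M :=
  fun x => FlowMonoid.csup fun i => Ch i x

/-- `≤`-continuity of a function on `X → M`: it commutes with joins of
pointwise-ascending chains. -/
def ContOn (X : Finset ℕ)
    (f : ({x : ℕ // x ∈ X} → M) → ({x : ℕ // x ∈ X} → M)) : Prop :=
  ∀ Ch : ℕ → ({x : ℕ // x ∈ X} → M), (∀ i x, Ch i x ≤ Ch (i + 1) x) →
    ∀ x, IsLUB (Set.range fun i => f (Ch i) x) (f (chainJoin Ch) x)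

/-- Pointwise `≤`-monotonicity of a function on `X → M`. -/
def MonoOn (X : Finset ℕ)
    (f : ({x : ℕ // x ∈ X} → M) → ({x : ℕ // x ∈ X} → M)) : Prop :=
  ∀ c d : {x : ℕ // x ∈ X} → M, (∀ x, c x ≤ d x) → ∀ x, f c x ≤ f d x

/-- Pointwise `⪯`-monotonicity of a function on `X → M`. -/
def RMonoOn (r : M → M → Prop) (X : Finset ℕ)
    (f : ({x : ℕ // x ∈ X} → M) → ({x : ℕ // x ∈ X} → M)) : Prop :=
  ∀ c d : {x : ℕ // x ∈ X} → M, (∀ x, r (c x) (d x)) → ∀ x, r (f c x) (f d x)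

/-- The join of the Kleene chain `⨆ᵢ fⁱ(⊥)` of a function on `X → M`
(`⊥` is the constant-0 function); for continuous `f` this is `lfp(f)`. -/
noncomputable def kleeneOn {X : Finset ℕ}
    (f : ({x : ℕ // x ∈ X} → M) → ({x : ℕ // x ∈ X} → M)) : {x : ℕ // x ∈ X} → M :=
  fun x => FlowMonoid.csup fun i => (f^[i] fun _ => 0) x

/-- Condition (C4): for all `≤`-continuous, pointwise-`⪯`-monotone functions
`f, g` on `X → M` with `fⁱ(⊥)` pointwise-`⪯` `gⁱ(⊥)` for all `i` and
`lfp(f)` pointwise-`⪯` `g(lfp(f))`, one has `⨆ᵢ fⁱ(⊥)` pointwise-`⪯` `⨆ᵢ gⁱ(⊥)`. -/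
def C4 (r : M → M → Prop) (X : Finset ℕ) : Prop :=
  ∀ f g : ({x : ℕ // x ∈ X} → M) → ({x : ℕ // x ∈ X} → M),
    ContOn X f → ContOn X g → RMonoOn r X f → RMonoOn r X g →
    (∀ (i : ℕ) (x : {x : ℕ // x ∈ X}), r ((f^[i] fun _ => 0) x) ((g^[i] fun _ => 0) x)) →
    (∀ x, r (kleeneOn f x) (g (kleeneOn f) x)) →
    ∀ x, r (kleeneOn f x) (kleeneOn g x)

/-- `compatible_⪯(h)`: conditions (C1)–(C4) of the relation `⪯` with respect to
the flow graph `h`. -/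
def Compatible (r : M → M → Prop) (h : FlowGraph M) : Prop :=
  -- (C1) transitive and `0 ⪯ 0`
  (∀ m n o : M, r m n → r n o → r m o) ∧ r 0 0 ∧
  -- (C2) compatible with addition
  (∀ m n o : M, r m n → r (m + o) (n + o)) ∧
  -- (C3) the edge functions of `h` are `⪯`-monotone
  (∀ x y : ℕ, x ∈ h.X → ∀ m n : M, r m n → r (h.E x y m) (h.E x y n)) ∧
  -- (C4)
  C4 r h.X

namespace FlowMonoid

lemma le_csup {K : ℕ → M} (hK : Monotone K) (i : ℕ) : K i ≤ csup K :=
  (isLUB_csup K hK).1 ⟨i, rfl⟩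

lemma csup_le {K : ℕ → M} (hK : Monotone K) {c : M} (h : ∀ i, K i ≤ c) : csup K ≤ c :=
  (isLUB_csup K hK).2 (by rintro _ ⟨i, rfl⟩; exact h i)

lemma csup_mono {K L : ℕ → M} (hK : Monotone K) (hL : Monotone L) (h : ∀ i, K i ≤ L i) :
    csup K ≤ csup L :=
  csup_le hK fun i => (h i).trans (le_csup hL i)

lemma csup_const (c : M) : csup (fun _ => c) = c :=
  le_antisymm (csup_le monotone_const fun _ => le_rfl) (le_csup monotone_const 0)

lemma csup_succ {K : ℕ → M} (hK : Monotone K) : csup (fun i => K (i + 1)) = csup K := by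
  have hK' : Monotone fun i => K (i + 1) := fun _ _ h => hK (by omega)
  exact le_antisymm (csup_le hK' fun i => le_csup hK (i + 1))
    (csup_mono hK hK' fun i => hK i.le_succ)

lemma csup_csup_eq_csup_diag {a : ℕ → ℕ → M} (h₁ : ∀ m, Monotone (a m))
    (h₂ : ∀ n, Monotone fun m => a m n) :
    csup (fun m => csup (a m)) = csup fun k => a k k := by
  have hdiag : Monotone fun k => a k k := fun i j hij => (h₁ i hij).trans (h₂ j hij)
  have houter : Monotone fun m => csup (a m) :=
    fun i j hij => csup_mono (h₁ i) (h₁ j) fun n => h₂ n hij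
  refine le_antisymm (csup_le houter fun m => csup_le (h₁ m) fun n => ?_)
    (csup_le hdiag fun k => (le_csup (h₁ k) k).trans (le_csup houter k))
  calc a m n ≤ a (max m n) (max m n) := (h₂ n (le_max_left m n)).trans (h₁ _ (le_max_right m n))
    _ ≤ _ := le_csup hdiag (max m n)

lemma csup_comm {a : ℕ → ℕ → M} (h₁ : ∀ m, Monotone (a m)) (h₂ : ∀ n, Monotone fun m => a m n) :
    csup (fun m => csup (a m)) = csup fun n => csup fun m => a m n := by
  rw [csup_csup_eq_csup_diag h₁ h₂, csup_csup_eq_csup_diag (a := fun n m => a m n) h₂ h₁]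

lemma csup_add {K L : ℕ → M} (hK : Monotone K) (hL : Monotone L) :
    csup K + csup L = csup fun i => K i + L i := by
  rw [add_csup _ _ hL]
  simp_rw [add_comm (csup K), add_csup _ _ hK]
  rw [csup_csup_eq_csup_diag (a := fun i j => L i + K j) (fun _ _ _ h => add_le_add le_rfl (hK h))
    fun _ _ _ h => add_le_add (hL h) le_rfl]
  simp_rw [add_comm]

lemma sum_csup {α : Type*} (s : Finset α) {K : ℕ → α → M} (hK : ∀ a, Monotone fun i => K i a) :
    ∑ a ∈ s, csup (fun i => K i a) = csup fun i => ∑ a ∈ s, K i a := by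
  classical
  induction s using Finset.induction with
  | empty => simp [csup_const]
  | insert a s ha ih =>
    simp only [Finset.sum_insert ha, ih]
    exact csup_add (hK a) fun _ _ h => Finset.sum_le_sum fun b _ => hK b h

end FlowMonoid

open FlowMonoid

namespace FMCont

variable {f : M → M}

lemma monotone (hf : FMCont f) : Monotone f := by
  intro m n hmn
  let K : ℕ → M := fun i => if i = 0 then m else n
  have hK : Monotone K := monotone_nat_of_le_succ fun i => by
    by_cases hi : i = 0 <;> simp [K, hi, hmn]
  have hKn : csup K = n :=
    le_antisymm (csup_le hK fun i => by by_cases hi : i = 0 <;> simp [K, hi, hmn])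
      (le_csup hK 1)
  simpa [K, hKn] using (hf K hK).1 ⟨0, rfl⟩

lemma map_csup (hf : FMCont f) {K : ℕ → M} (hK : Monotone K) :
    f (csup K) = csup fun i => f (K i) :=
  ((isLUB_csup _ (hf.monotone.comp hK)).unique (hf K hK)).symm

end FMCont

section Kleene

variable {ι κ : Type*}

noncomputable def csupPi (Ch : ℕ → ι → M) : ι → M := fun x => csup fun n => Ch n x

def PreservesCsup (F : (ι → M) → ι → M) : Prop :=
  ∀ Ch : ℕ → ι → M, Monotone Ch → F (csupPi Ch) = csupPi fun n => F (Ch n)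

noncomputable def kleene (F : (ι → M) → ι → M) : ι → M := csupPi fun n => F^[n] fun _ => 0

lemma csupPi_const (c : ι → M) : csupPi (fun _ => c) = c :=
  funext fun x => csup_const (c x)

lemma csupPi_mono {C D : ℕ → ι → M} (hC : Monotone C) (hD : Monotone D) (h : ∀ n, C n ≤ D n) :
    csupPi C ≤ csupPi D :=
  fun x => csup_mono (fun _ _ hmn => hC hmn x) (fun _ _ hmn => hD hmn x) fun n => h n x

lemma csupPi_le {C : ℕ → ι → M} (hC : Monotone C) {c : ι → M} (h : ∀ n, C n ≤ c) :
    csupPi C ≤ c :=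
  fun x => csup_le (fun _ _ hmn => hC hmn x) fun n => h n x

lemma PreservesCsup.contOn {X : Finset ℕ} {f : ({x : ℕ // x ∈ X} → M) → {x : ℕ // x ∈ X} → M}
    (hm : Monotone f) (hc : PreservesCsup f) : ContOn X f := by
  intro Ch hCh x
  have hCh' : Monotone Ch := monotone_nat_of_le_succ fun n => hCh n
  rw [show chainJoin Ch = csupPi Ch from rfl, hc Ch hCh']
  exact isLUB_csup _ fun _ _ hmn => hm (hCh' hmn) x

variable {F G : (ι → M) → ι → M}

lemma monotone_iterate_zero (hF : Monotone F) : Monotone fun n => F^[n] fun _ => 0 :=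
  hF.monotone_iterate_of_le_map fun _ => zero_le

lemma map_kleene (hF : Monotone F) (hc : PreservesCsup F) : F (kleene F) = kleene F := by
  have hch := monotone_iterate_zero hF
  rw [kleene, hc _ hch]
  simp_rw [← Function.iterate_succ_apply' F]
  exact funext fun x => csup_succ fun _ _ hmn => hch hmn x

lemma kleene_le (hF : Monotone F) {c : ι → M} (hc : F c ≤ c) : kleene F ≤ c := by
  refine csupPi_le (monotone_iterate_zero hF) fun n => ?_
  induction n with
  | zero => exact fun _ => zero_le
  | succ n ih => rw [Function.iterate_succ_apply']; exact (hF ih).trans hc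

lemma kleene_mono (hF : Monotone F) (hG : Monotone G) (hFG : F ≤ G) : kleene F ≤ kleene G :=
  csupPi_mono (monotone_iterate_zero hF) (monotone_iterate_zero hG)
    fun n => hF.iterate_le_of_le hFG n _

lemma kleene_csupPi {F : (κ → M) → (ι → M) → ι → M} (hF : ∀ p, Monotone (F p))
    (hFp : Monotone F)
    (hc : ∀ P : ℕ → κ → M, Monotone P → ∀ C : ℕ → ι → M, Monotone C →
      F (csupPi P) (csupPi C) = csupPi fun m => F (P m) (C m))
    {P : ℕ → κ → M} (hP : Monotone P) :
    kleene (F (csupPi P)) = csupPi fun m => kleene (F (P m)) := by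
  have hm : ∀ n, Monotone fun m => (F (P m))^[n] fun _ => 0 :=
    fun n _ _ hab => (hF _).iterate_le_of_le (hFp (hP hab)) n _
  have hiter : ∀ n, (F (csupPi P))^[n] (fun _ => 0) = csupPi fun m => (F (P m))^[n] fun _ => 0 := by
    intro n
    induction n with
    | zero => exact (csupPi_const _).symm
    | succ n ih => simp_rw [Function.iterate_succ_apply', ih, hc P hP _ (hm n)]
  funext x
  simp only [kleene, csupPi, hiter]
  exact csup_comm (fun n _ _ hab => hm n hab x)
    fun m _ _ hab => monotone_iterate_zero (hF _) hab x

end Kleene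

section Glue

variable {X : Finset ℕ} {α : Type*}

variable (X) in
def glue (v : {x : ℕ // x ∈ X} → α) (c : ℕ → α) : ℕ → α :=
  fun y => if h : y ∈ X then v ⟨y, h⟩ else c y

@[simp]
lemma glue_of_mem {v : {x : ℕ // x ∈ X} → α} {c : ℕ → α} {y : ℕ} (hy : y ∈ X) :
    glue X v c y = v ⟨y, hy⟩ :=
  dif_pos hy

@[simp]
lemma glue_of_not_mem {v : {x : ℕ // x ∈ X} → α} {c : ℕ → α} {y : ℕ} (hy : y ∉ X) :
    glue X v c y = c y :=
  dif_neg hy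

lemma glue_restrict (c : ℕ → α) : glue X (fun y => c y.1) c = c := by
  funext y; by_cases hy : y ∈ X <;> simp [hy]

lemma glue_restrict_zero [Zero α] {c : ℕ → α} (hc : ∀ y ∉ X, c y = 0) :
    glue X (fun y => c y.1) (fun _ => 0) = c := by
  funext y; by_cases hy : y ∈ X <;> simp [hy, hc]

lemma glue_mono [Preorder α] {v v' : {x : ℕ // x ∈ X} → α} {c c' : ℕ → α} (hv : v ≤ v')
    (hc : c ≤ c') : glue X v c ≤ glue X v' c' := by
  intro y; by_cases hy : y ∈ X <;> simp [hy, hv _, hc y]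

lemma glue_csupPi (V : ℕ → {x : ℕ // x ∈ X} → M) (C : ℕ → ℕ → M) :
    glue X (csupPi V) (csupPi C) = csupPi fun m => glue X (V m) (C m) := by
  funext y; by_cases hy : y ∈ X <;> simp [hy, csupPi]

variable (X) in
def restrictOn (F : (ℕ → M) → ℕ → M) : ({x : ℕ // x ∈ X} → M) → {x : ℕ // x ∈ X} → M :=
  fun c x => F (glue X c fun _ => 0) x.1

variable {F : (ℕ → M) → ℕ → M}

lemma monotone_restrictOn (hF : Monotone F) : Monotone (restrictOn X F) :=
  fun _ _ hcd x => hF (glue_mono hcd le_rfl) x.1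

lemma preservesCsup_restrictOn (hc : PreservesCsup F) :
    PreservesCsup (restrictOn X F) := by
  intro Ch hCh
  have hglue : glue X (csupPi Ch) (fun _ => 0) = csupPi fun m => glue X (Ch m) fun _ => 0 := by
    rw [← glue_csupPi, csupPi_const]
  funext x
  simp only [restrictOn, hglue, hc _ fun _ _ hmn => glue_mono (hCh hmn) le_rfl]
  rfl

lemma iterate_apply_eq_zero (hF : ∀ c, ∀ y ∉ X, F c y = 0) {y : ℕ} (hy : y ∉ X) :
    ∀ n, F^[n] (fun _ => 0) y = 0
  | 0 => rfl
  | n + 1 => by rw [Function.iterate_succ_apply', hF _ y hy]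

lemma kleene_apply_eq_zero (hF : ∀ c, ∀ y ∉ X, F c y = 0) {y : ℕ} (hy : y ∉ X) :
    kleene F y = 0 := by
  simp only [kleene, csupPi, iterate_apply_eq_zero hF hy, csup_const]

lemma iterate_restrictOn (hF : ∀ c, ∀ y ∉ X, F c y = 0) (n : ℕ) :
    (restrictOn X F)^[n] (fun _ => 0) = fun x => F^[n] (fun _ => 0) x.1 := by
  induction n with
  | zero => rfl
  | succ n ih =>
    rw [Function.iterate_succ_apply', Function.iterate_succ_apply', ih]
    funext x
    rw [restrictOn, glue_restrict_zero fun y hy => iterate_apply_eq_zero hF hy n]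

lemma kleene_restrictOn (hF : ∀ c, ∀ y ∉ X, F c y = 0) :
    kleene (restrictOn X F) = fun x => kleene F x.1 := by
  funext x
  simp only [kleene, csupPi, iterate_restrictOn hF]

end Glue

namespace FlowGraph

variable (h : FlowGraph M) (i : ℕ → ℕ → M)

lemma monotone_E (y x : ℕ) : Monotone (h.E y x) := by
  by_cases hy : y ∈ h.X
  · exact (h.econt y x hy).monotone
  · rw [h.edom y x hy]; exact monotone_const

lemma stepWith_of_not_mem {c : ℕ → M} {x : ℕ} (hx : x ∉ h.X) : h.stepWith i c x = 0 :=
  if_neg hx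

lemma monotone_stepWith : Monotone (h.stepWith i) := by
  intro c d hcd x
  by_cases hx : x ∈ h.X
  · simp only [stepWith, if_pos hx]
    exact add_le_add le_rfl (Finset.sum_le_sum fun y _ => h.monotone_E y x (hcd y))
  · simp [h.stepWith_of_not_mem i hx]

lemma preservesCsup_stepWith : PreservesCsup (h.stepWith i) := by
  intro Ch hCh
  funext x
  by_cases hx : x ∈ h.X
  · have hE : ∀ y, Monotone fun n => h.E y x (Ch n y) :=
      fun y _ _ hmn => h.monotone_E y x (hCh hmn y)
    simp only [stepWith, if_pos hx, csupPi]
    rw [Finset.sum_congr rfl fun y hy => (h.econt y x hy).map_csup fun _ _ hmn => hCh hmn y,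
      sum_csup _ hE, add_csup _ _ fun _ _ hmn => Finset.sum_le_sum fun y _ => hE y hmn]
  · simp [h.stepWith_of_not_mem i hx, csupPi, csup_const]

lemma stepWith_flowWith : h.stepWith i (h.flowWith i) = h.flowWith i :=
  map_kleene (h.monotone_stepWith i) (h.preservesCsup_stepWith i)

lemma flowWith_le {c : ℕ → M} (hc : h.stepWith i c ≤ c) : h.flowWith i ≤ c :=
  kleene_le (h.monotone_stepWith i) hc

lemma stepWith_flow : h.stepWith h.inflow h.flow = h.flow :=
  h.stepWith_flowWith h.inflow

variable {h₁ h₂ : FlowGraph M}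

lemma gmul_X : (gmul h₁ h₂).X = h₁.X ∪ h₂.X :=
  rfl

lemma gmul_E_of_mem_left {x : ℕ} (hx : x ∈ h₁.X) : (gmul h₁ h₂).E x = h₁.E x :=
  funext fun _ => if_pos hx

lemma gmul_E_of_mem_right (hdisj : Disjoint h₁.X h₂.X) {x : ℕ} (hx : x ∈ h₂.X) :
    (gmul h₁ h₂).E x = h₂.E x :=
  funext fun _ => if_neg (Finset.disjoint_right.mp hdisj hx)

lemma gmul_inflow_of_mem {z x : ℕ} (hz : z ∈ h₁.X ∪ h₂.X) : (gmul h₁ h₂).inflow z x = 0 :=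
  if_pos hz

lemma gmul_stepWith_glue (hdisj : Disjoint h₁.X h₂.X) (v : {x : ℕ // x ∈ h₂.X} → M)
    (c : ℕ → M) {x : ℕ} (hx : x ∈ h₁.X ∪ h₂.X) :
    (gmul h₁ h₂).stepWith (gmul h₁ h₂).inflow (glue h₂.X v c) x =
      (∑ᶠ z, (gmul h₁ h₂).inflow z x) + ∑ y ∈ h₁.X, h₁.E y x (c y) +
        ∑ y ∈ h₂.X.attach, h₂.E y.1 x (v y) := by
  rw [stepWith, gmul_X, if_pos hx, add_assoc, Finset.sum_union hdisj,
    ← Finset.sum_attach h₂.X fun y => (gmul h₁ h₂).E y x (glue h₂.X v c y)]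
  congr 2
  · refine Finset.sum_congr rfl fun y hy => ?_
    rw [gmul_E_of_mem_left hy, glue_of_not_mem (Finset.disjoint_left.mp hdisj hy)]
  · refine Finset.sum_congr rfl fun y _ => ?_
    rw [gmul_E_of_mem_right hdisj y.2, glue_of_mem y.2]

variable (h₁ h₂) in
/-- The inflow `in_cval`. -/
def boundaryInflow (cval : {x : ℕ // x ∈ h₂.X} → M) : ℕ → ℕ → M :=
  fun x y => if hx : x ∈ h₂.X then h₂.E x y (cval ⟨x, hx⟩) else (gmul h₁ h₂).inflow x y

variable (h₁ h₂) in
/-- The function `f`. -/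
noncomputable def partialStep (cval : {x : ℕ // x ∈ h₂.X} → M) : {x : ℕ // x ∈ h₂.X} → M :=
  fun x => (∑ᶠ z, (gmul h₁ h₂).inflow z x.1) + h₁.tf (boundaryInflow h₁ h₂ cval) x.1 +
    ∑ y ∈ h₂.X.attach, h₂.E y.1 x.1 (cval y)

lemma finsum_boundaryInflow (cval : {x : ℕ // x ∈ h₂.X} → M) (x : ℕ) :
    ∑ᶠ z, boundaryInflow h₁ h₂ cval z x =
      ∑ y ∈ h₂.X.attach, h₂.E y.1 x (cval y) + ∑ᶠ z, (gmul h₁ h₂).inflow z x := by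
  set e : ℕ → M := glue h₂.X (fun y => h₂.E y.1 x (cval y)) fun _ => 0
  have hsplit : ∀ z, boundaryInflow h₁ h₂ cval z x = e z + (gmul h₁ h₂).inflow z x := by
    intro z
    by_cases hz : z ∈ h₂.X
    · simp [e, boundaryInflow, hz, gmul_inflow_of_mem (Finset.mem_union_right _ hz)]
    · simp [e, boundaryInflow, hz]
  have hsupp : Function.support e ⊆ h₂.X :=
    fun z hz => by_contra fun h => hz (glue_of_not_mem h)
  rw [finsum_congr hsplit,
    finsum_add_distrib (h₂.X.finite_toSet.subset hsupp) ((gmul h₁ h₂).inflow_fin x),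
    finsum_eq_sum_of_support_subset _ hsupp, ← Finset.sum_attach]
  simp [e]

lemma stepWith_boundaryInflow (hdisj : Disjoint h₁.X h₂.X) (cval : {x : ℕ // x ∈ h₂.X} → M)
    (c : ℕ → M) {x : ℕ} (hx : x ∈ h₁.X) :
    h₁.stepWith (boundaryInflow h₁ h₂ cval) c x =
      (gmul h₁ h₂).stepWith (gmul h₁ h₂).inflow (glue h₂.X cval c) x := by
  rw [gmul_stepWith_glue hdisj _ _ (Finset.mem_union_left _ hx), stepWith, if_pos hx,
    finsum_boundaryInflow]
  abel

lemma partialStep_eq (hdisj : Disjoint h₁.X h₂.X) (cval : {x : ℕ // x ∈ h₂.X} → M)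
    (x : {x : ℕ // x ∈ h₂.X}) :
    partialStep h₁ h₂ cval x = (gmul h₁ h₂).stepWith (gmul h₁ h₂).inflow
      (glue h₂.X cval (h₁.flowWith (boundaryInflow h₁ h₂ cval))) x.1 := by
  rw [gmul_stepWith_glue hdisj _ _ (Finset.mem_union_right _ x.2)]
  rfl

lemma monotone_stepWith_boundaryInflow :
    Monotone fun cval => h₁.stepWith (boundaryInflow h₁ h₂ cval) := by
  intro cval cval' hcv c x
  by_cases hx : x ∈ h₁.X
  · simp only [stepWith, if_pos hx, finsum_boundaryInflow]
    exact add_le_add (add_le_add (Finset.sum_le_sum fun y _ => h₂.monotone_E _ _ (hcv y)) le_rfl)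
      le_rfl
  · simp [stepWith_of_not_mem _ _ hx]

lemma monotone_flowWith_boundaryInflow :
    Monotone fun cval => h₁.flowWith (boundaryInflow h₁ h₂ cval) :=
  fun _ _ hcv => kleene_mono (h₁.monotone_stepWith _) (h₁.monotone_stepWith _)
    (monotone_stepWith_boundaryInflow hcv)

lemma flowWith_boundaryInflow_csupPi (hdisj : Disjoint h₁.X h₂.X)
    {P : ℕ → {x : ℕ // x ∈ h₂.X} → M} (hP : Monotone P) :
    h₁.flowWith (boundaryInflow h₁ h₂ (csupPi P)) =
      csupPi fun m => h₁.flowWith (boundaryInflow h₁ h₂ (P m)) := by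
  refine kleene_csupPi (fun _ => h₁.monotone_stepWith _) monotone_stepWith_boundaryInflow
    (fun P hP C hC => funext fun x => ?_) hP
  by_cases hx : x ∈ h₁.X
  · rw [stepWith_boundaryInflow hdisj _ _ hx, glue_csupPi,
      preservesCsup_stepWith _ _ _ fun _ _ hmn => glue_mono (hP hmn) (hC hmn)]
    simp only [csupPi, stepWith_boundaryInflow hdisj _ _ hx]
  · simp [stepWith_of_not_mem _ _ hx, csupPi, csup_const]

lemma monotone_partialStep (hdisj : Disjoint h₁.X h₂.X) : Monotone (partialStep h₁ h₂) := by
  intro cval cval' hcv x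
  rw [partialStep_eq hdisj, partialStep_eq hdisj]
  exact monotone_stepWith _ _ (glue_mono hcv (monotone_flowWith_boundaryInflow hcv)) _

lemma preservesCsup_partialStep (hdisj : Disjoint h₁.X h₂.X) :
    PreservesCsup (partialStep h₁ h₂) := by
  intro P hP
  funext x
  rw [partialStep_eq hdisj, flowWith_boundaryInflow_csupPi hdisj hP, glue_csupPi,
    preservesCsup_stepWith _ _ _ fun _ _ hmn =>
      glue_mono (hP hmn) (monotone_flowWith_boundaryInflow (hP hmn))]
  simp only [csupPi, partialStep_eq hdisj]

lemma flow_eq_kleene_partialStep (hmul : MDef h₁ h₂) (x : {x : ℕ // x ∈ h₂.X}) :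
    h₂.flow x.1 = kleene (partialStep h₁ h₂) x := by
  obtain ⟨hdisj, -, -, hflow⟩ := hmul
  set G := gmul h₁ h₂
  set v := kleene (partialStep h₁ h₂)
  rw [← hflow x.1 x.2]
  refine le_antisymm ?_ ?_
  · have hv : partialStep h₁ h₂ v = v :=
      map_kleene (monotone_partialStep hdisj) (preservesCsup_partialStep hdisj)
    have hle : G.flow ≤ glue h₂.X v (h₁.flowWith (boundaryInflow h₁ h₂ v)) := by
      refine G.flowWith_le _ fun y => ?_
      by_cases hy₂ : y ∈ h₂.X
      · rw [glue_of_mem hy₂, ← partialStep_eq hdisj v ⟨y, hy₂⟩, hv]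
      by_cases hy₁ : y ∈ h₁.X
      · rw [glue_of_not_mem hy₂, ← stepWith_boundaryInflow hdisj _ _ hy₁, h₁.stepWith_flowWith]
      · rw [G.stepWith_of_not_mem _ fun hy => (Finset.mem_union.mp hy).elim hy₁ hy₂]
        exact zero_le
    simpa using hle x.1
  · have hflow₁ : h₁.flowWith (boundaryInflow h₁ h₂ fun y => G.flow y.1) ≤ G.flow := by
      refine h₁.flowWith_le _ fun y => ?_
      by_cases hy₁ : y ∈ h₁.X
      · rw [stepWith_boundaryInflow hdisj _ _ hy₁, glue_restrict, G.stepWith_flow]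
      · rw [h₁.stepWith_of_not_mem _ hy₁]
        exact zero_le
    refine kleene_le (monotone_partialStep hdisj) (c := fun y => G.flow y.1) (fun y => ?_) x
    calc partialStep h₁ h₂ (fun y => G.flow y.1) y
        ≤ G.stepWith G.inflow (glue h₂.X (fun y => G.flow y.1) G.flow) y.1 := by
          rw [partialStep_eq hdisj]
          exact G.monotone_stepWith _ (glue_mono le_rfl hflow₁) _
      _ = G.flow y.1 := by rw [glue_restrict, G.stepWith_flow]

end FlowGraph

section Rel

variable {r : M → M → Prop}

lemma rel_add_left (hadd : ∀ m n o : M, r m n → r (m + o) (n + o)) {m n : M} (o : M)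
    (h : r m n) : r (o + m) (o + n) := by
  simpa only [add_comm o] using hadd m n o h

lemma sum_rel (htr : ∀ m n o : M, r m n → r n o → r m o) (h0 : r 0 0)
    (hadd : ∀ m n o : M, r m n → r (m + o) (n + o)) {α : Type*} {s : Finset α} {a b : α → M}
    (h : ∀ y ∈ s, r (a y) (b y)) : r (∑ y ∈ s, a y) (∑ y ∈ s, b y) := by
  rw [← Finset.sum_attach s a, ← Finset.sum_attach s b]
  exact Finset.sum_hom_rel h0 fun y _ _ hmn =>
    htr _ _ _ (hadd _ _ _ (h y y.2)) (rel_add_left hadd _ hmn)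

namespace FlowGraph

lemma stepWith_rel (h : FlowGraph M) (i : ℕ → ℕ → M) (htr : ∀ m n o : M, r m n → r n o → r m o)
    (h0 : r 0 0) (hadd : ∀ m n o : M, r m n → r (m + o) (n + o))
    (hE : ∀ y ∈ h.X, ∀ x m n, r m n → r (h.E y x m) (h.E y x n)) {c c' : ℕ → M}
    (hc : ∀ y ∈ h.X, r (c y) (c' y)) (x : ℕ) : r (h.stepWith i c x) (h.stepWith i c' x) := by
  by_cases hx : x ∈ h.X
  · simp only [stepWith, if_pos hx]
    exact rel_add_left hadd _ (sum_rel htr h0 hadd fun y hy => hE y hy x _ _ (hc y hy))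
  · simpa only [h.stepWith_of_not_mem i hx] using h0

end FlowGraph

namespace Compatible

open FlowGraph

variable {h₁ h₂ : FlowGraph M}

lemma rel_E_left (hr : Compatible r (gmul h₁ h₂)) :
    ∀ y ∈ h₁.X, ∀ x m n, r m n → r (h₁.E y x m) (h₁.E y x n) := fun y hy x m n hmn => by
  simpa only [gmul_E_of_mem_left hy] using hr.2.2.2.1 y x (Finset.mem_union_left _ hy) m n hmn

lemma rel_E_right (hdisj : Disjoint h₁.X h₂.X) (hr : Compatible r (gmul h₁ h₂)) :
    ∀ y ∈ h₂.X, ∀ x m n, r m n → r (h₂.E y x m) (h₂.E y x n) := fun y hy x m n hmn => by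
  simpa only [gmul_E_of_mem_right hdisj hy] using
    hr.2.2.2.1 y x (Finset.mem_union_right _ hy) m n hmn

end Compatible

namespace FlowGraph

variable {h₁ h₂ : FlowGraph M}

lemma stepWith_boundaryInflow_rel (hdisj : Disjoint h₁.X h₂.X)
    (hr : Compatible r (gmul h₁ h₂)) {cval cval' : {x : ℕ // x ∈ h₂.X} → M}
    (hcv : ∀ y, r (cval y) (cval' y)) (c : ℕ → M) (x : ℕ) :
    r (h₁.stepWith (boundaryInflow h₁ h₂ cval) c x)
      (h₁.stepWith (boundaryInflow h₁ h₂ cval') c x) := by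
  have hE₂ := hr.rel_E_right hdisj
  obtain ⟨htr, h0, hadd, -, -⟩ := hr
  by_cases hx : x ∈ h₁.X
  · simp only [stepWith, if_pos hx, finsum_boundaryInflow]
    exact hadd _ _ _ (hadd _ _ _ (sum_rel htr h0 hadd fun y _ => hE₂ y y.2 x _ _ (hcv y)))
  · simpa only [h₁.stepWith_of_not_mem _ hx] using h0

lemma iterate_stepWith_boundaryInflow_rel (hdisj : Disjoint h₁.X h₂.X)
    (hr : Compatible r (gmul h₁ h₂)) {cval cval' : {x : ℕ // x ∈ h₂.X} → M}
    (hcv : ∀ y, r (cval y) (cval' y)) (n : ℕ) (y : ℕ) :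
    r ((h₁.stepWith (boundaryInflow h₁ h₂ cval))^[n] (fun _ => 0) y)
      ((h₁.stepWith (boundaryInflow h₁ h₂ cval'))^[n] (fun _ => 0) y) := by
  induction n generalizing y with
  | zero => exact hr.2.1
  | succ n ih =>
    rw [Function.iterate_succ_apply', Function.iterate_succ_apply']
    exact hr.1 _ _ _ (h₁.stepWith_rel _ hr.1 hr.2.1 hr.2.2.1 hr.rel_E_left (fun y _ => ih y) y)
      (stepWith_boundaryInflow_rel hdisj hr hcv _ y)

/-- Proved by (C4) for the step functions of `h₁`, transported to the nodes of `h₁ ⋆ h₂`. -/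
lemma flowWith_boundaryInflow_rel (hdisj : Disjoint h₁.X h₂.X)
    (hr : Compatible r (gmul h₁ h₂)) {cval cval' : {x : ℕ // x ∈ h₂.X} → M}
    (hcv : ∀ y, r (cval y) (cval' y)) :
    ∀ z ∈ h₁.X, r (h₁.flowWith (boundaryInflow h₁ h₂ cval) z)
      (h₁.flowWith (boundaryInflow h₁ h₂ cval') z) := by
  set F := fun cv => h₁.stepWith (boundaryInflow h₁ h₂ cv)
  set Y := (gmul h₁ h₂).X
  have hvan : ∀ cv c, ∀ y ∉ Y, F cv c y = 0 := fun _ _ _ hy =>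
    h₁.stepWith_of_not_mem _ fun h => hy (Finset.mem_union_left _ h)
  have hcont : ∀ cv, ContOn Y (restrictOn Y (F cv)) := fun _ =>
    (preservesCsup_restrictOn (h₁.preservesCsup_stepWith _)).contOn
      (monotone_restrictOn (h₁.monotone_stepWith _))
  have hrmono : ∀ cv, RMonoOn r Y (restrictOn Y (F cv)) := fun _ c d hcd x =>
    h₁.stepWith_rel _ hr.1 hr.2.1 hr.2.2.1 hr.rel_E_left (fun y hy => by
      have hy' : y ∈ Y := Finset.mem_union_left _ hy
      rw [glue_of_mem hy', glue_of_mem hy']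
      exact hcd _) x.1
  have hfix : ∀ x, r (kleene (F cval) x) (F cval' (kleene (F cval)) x) := fun x => by
    have := stepWith_boundaryInflow_rel hdisj hr hcv (h₁.flowWith (boundaryInflow h₁ h₂ cval)) x
    rwa [h₁.stepWith_flowWith] at this
  have hkl : ∀ x, r (kleene (restrictOn Y (F cval)) x) (kleene (restrictOn Y (F cval')) x) :=
    hr.2.2.2.2 _ _ (hcont cval) (hcont cval') (hrmono cval) (hrmono cval')
      (fun n x => by
        rw [iterate_restrictOn (hvan _), iterate_restrictOn (hvan _)]
        exact iterate_stepWith_boundaryInflow_rel hdisj hr hcv n x.1)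
      (fun x => show r (kleene (restrictOn Y (F cval)) x)
          (restrictOn Y (F cval') (kleene (restrictOn Y (F cval))) x) by
        simpa only [kleene_restrictOn (hvan _), restrictOn,
          glue_restrict_zero fun y hy => kleene_apply_eq_zero (hvan cval) hy] using hfix x.1)
  intro z hz
  have := hkl ⟨z, Finset.mem_union_left _ hz⟩
  rw [kleene_restrictOn (hvan _), kleene_restrictOn (hvan _)] at this
  exact this

lemma partialStep_rel (hdisj : Disjoint h₁.X h₂.X) (hr : Compatible r (gmul h₁ h₂)) :
    RMonoOn r h₂.X (partialStep h₁ h₂) := by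
  intro c d hcd x
  have hE₁ := hr.rel_E_left
  have hE₂ := hr.rel_E_right hdisj
  have hflow := flowWith_boundaryInflow_rel hdisj hr hcd
  obtain ⟨htr, h0, hadd, -, -⟩ := hr
  have htf : r (h₁.tf (boundaryInflow h₁ h₂ c) x) (h₁.tf (boundaryInflow h₁ h₂ d) x) :=
    sum_rel htr h0 hadd fun z hz => hE₁ z hz x _ _ (hflow z hz)
  exact htr _ _ _ (hadd _ _ _ (rel_add_left hadd _ htf))
    (rel_add_left hadd _ (sum_rel htr h0 hadd fun y _ => hE₂ y y.2 x _ _ (hcd y)))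

end FlowGraph

end Rel

open FlowGraph in
/-- Partial fixed-point computation (Bekić-style). For
`h₁ ⋆ h₂` defined, the function `f` that computes one step of the flow of `h₂`
relative to the transfer function of `h₁` (fed with the inflow `in_cval`
induced by the current values `cval` on `h₂`) is monotone and continuous w.r.t.
the pointwise natural order, its Kleene join is its least fixed point and
equals `h₂.flow`; and under `compatible_⪯(h₁ ⋆ h₂)` it is pointwise
`⪯`-monotone. -/
theorem bekic_partial_fixed_point (h₁ h₂ : FlowGraph M) (hmul : MDef h₁ h₂)
    (inC : ({x : ℕ // x ∈ h₂.X} → M) → ℕ → ℕ → M)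
    (hinC : ∀ (cval : {x : ℕ // x ∈ h₂.X} → M) (x y : ℕ),
      inC cval x y =
        if hx : x ∈ h₂.X then h₂.E x y (cval ⟨x, hx⟩) else (gmul h₁ h₂).inflow x y)
    (f : ({x : ℕ // x ∈ h₂.X} → M) → ({x : ℕ // x ∈ h₂.X} → M))
    (hf : ∀ (cval : {x : ℕ // x ∈ h₂.X} → M) (x : {x : ℕ // x ∈ h₂.X}),
      f cval x =
        (∑ᶠ z, (gmul h₁ h₂).inflow z x.1) + h₁.tf (inC cval) x.1 +
          ∑ y ∈ h₂.X.attach, h₂.E y.1 x.1 (cval y)) :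
    MonoOn h₂.X f ∧ ContOn h₂.X f ∧
    (∀ x, f (kleeneOn f) x = kleeneOn f x) ∧
    (∀ c : {x : ℕ // x ∈ h₂.X} → M, (∀ x, f c x = c x) → ∀ x, kleeneOn f x ≤ c x) ∧
    (∀ x : {x : ℕ // x ∈ h₂.X}, h₂.flow x.1 = kleeneOn f x) ∧
    (∀ r : M → M → Prop, Compatible r (gmul h₁ h₂) → RMonoOn r h₂.X f) := by
  have hdisj : Disjoint h₁.X h₂.X := hmul.1
  obtain rfl : inC = boundaryInflow h₁ h₂ := funext fun cval => funext fun x => funext (hinC cval x)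
  obtain rfl : f = partialStep h₁ h₂ := funext fun cval => funext (hf cval)
  have hmono := monotone_partialStep hdisj
  have hcont := preservesCsup_partialStep hdisj
  exact ⟨fun _ _ hcd => hmono hcd, hcont.contOn hmono, congrFun (map_kleene hmono hcont),
    fun _ hc => kleene_le hmono fun y => (hc y).le, flow_eq_kleene_partialStep hmul,
    fun _ hr => partialStep_rel hdisj hr⟩
end
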